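/- arXiv:0709.2852 — 3 statements merged into one kernel-verified Lean document; each statement's English description precedes it below -/
import Mathlib

section
/- A finite cyclic group has no nontrivial relations between permutation representations: if G is cyclic and Σᵢ nᵢ ℂ[G/Hᵢ] = 0 as a virtual representation (Hᵢ ranging over distinct subgroups), then all nᵢ = 0. -/
open scoped BigOperators

/-- The permutation character of `G` acting on the left cosets `G / H`:
its value at `g` is the number of fixed points of `g` on `G / H`, i.e. the character
of the complex permutation representation `C[G/H]`. -/
noncomputable def permChar {G : Type*} [Group G] (H : Subgroup G) (g : G) : ℤ :=
  Nat.card {x : G ⧸ H // g • x = x}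

section

variable {G : Type*} [Group G] {H : Subgroup G}

lemma smul_coset_eq_self_iff [H.Normal] (g : G) (x : G ⧸ H) : g • x = x ↔ g ∈ H := by
  induction x using QuotientGroup.induction_on with
  | H x =>
    rw [MulAction.Quotient.smul_mk, QuotientGroup.eq, smul_eq_mul, mul_inv_rev, mul_assoc,
      ‹H.Normal›.mem_comm_iff, mul_assoc, mul_inv_cancel, mul_one, inv_mem_iff]

lemma permChar_of_mem [H.Normal] {g : G} (hg : g ∈ H) : permChar H g = H.index := by
  simp only [permChar, smul_coset_eq_self_iff, hg, Subgroup.index]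
  exact_mod_cast Nat.card_congr (Equiv.subtypeUnivEquiv fun _ => trivial)

lemma permChar_of_notMem [H.Normal] {g : G} (hg : g ∉ H) : permChar H g = 0 := by
  simp [permChar, smul_coset_eq_self_iff, hg]

/-- Evaluating at a generator of an inclusion-maximal `H` with `n H ≠ 0` kills every other term,
since the permutation character of a normal `K` is supported on `K`. -/
theorem eq_zero_of_sum_permChar_eq_zero (s : Finset (Subgroup G)) (n : Subgroup G → ℤ)
    (hnormal : ∀ H ∈ s, H.Normal) (hcyclic : ∀ H ∈ s, IsCyclic H)
    (hindex : ∀ H ∈ s, H.FiniteIndex) (hrel : ∀ g : G, ∑ H ∈ s, n H * permChar H g = 0) :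
    ∀ H ∈ s, n H = 0 := by
  classical
  by_contra! hne
  set t := s.filter (n · ≠ 0)
  obtain ⟨H₀, hH₀max⟩ := t.exists_maximal (by simpa [Finset.Nonempty, t] using hne)
  obtain ⟨hH₀s, hnH₀⟩ := Finset.mem_filter.mp hH₀max.prop
  obtain ⟨g, hg⟩ := H₀.isCyclic_iff_exists_zpowers_eq_top.mp (hcyclic H₀ hH₀s)
  have hsum : ∑ H ∈ s, n H * permChar H g = n H₀ * H₀.index := by
    have := hnormal H₀ hH₀s
    rw [← Finset.sum_filter_of_ne fun H _ h => left_ne_zero_of_mul h,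
      Finset.sum_eq_single_of_mem H₀ hH₀max.prop,
      permChar_of_mem (hg ▸ Subgroup.mem_zpowers g)]
    intro K hKt hKH₀
    have := hnormal K (Finset.mem_filter.mp hKt).1
    have hgK : g ∉ K := fun hgK =>
      hKH₀ (hH₀max.eq_of_le hKt (hg ▸ Subgroup.zpowers_le.mpr hgK)).symm
    rw [permChar_of_notMem hgK, mul_zero]
  have := hindex H₀ hH₀s
  exact mul_ne_zero hnH₀ (Nat.cast_ne_zero.mpr Subgroup.FiniteIndex.index_ne_zero)
    (hsum ▸ hrel g)

end

/-- A finite cyclic group has no nontrivial relations between permutation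
representations: if a ZZ-linear combination of the permutation representations
`C[G/H]`, over distinct subgroups H (a Finset of subgroups), is zero as a virtual
representation (equivalently its character vanishes), then all coefficients vanish. -/
theorem cyclic_has_no_relations
    {G : Type*} [Group G] [Fintype G] [IsCyclic G]
    (s : Finset (Subgroup G)) (n : Subgroup G → ℤ)
    (hrel : ∀ g : G, ∑ H ∈ s, n H * permChar H g = 0) :
    ∀ H ∈ s, n H = 0 :=
  eq_zero_of_sum_permChar_eq_zero s n (fun _ _ => inferInstance) (fun _ _ => inferInstance)
    (fun _ _ => inferInstance) hrel
end

section
/- For the dihedral group G = D₂ₙ = ⟨g, h | hⁿ = g² = (gh)² = 1⟩, the combination {1} − ⟨g⟩ − ⟨gh⟩ − ⟨h⟩ + 2·G is a G-relation, i.e. ℂ[G] ⊕ ℂ[G/G]^{⊕2} ≅ ℂ[G/⟨g⟩] ⊕ ℂ[G/⟨gh⟩] ⊕ ℂ[G/⟨h⟩] as complex representations. -/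
open scoped BigOperators

/-!
The identity is checked on permutation characters, element by element. A rotation `r i` acts
trivially on `G/⟨r 1⟩` (a normal subgroup of index 2), and for `i ≠ 0` it fixes no coset of `1`,
`⟨sr 0⟩` or `⟨sr 1⟩`, so both sides equal 2; at the identity both sides equal `2n + 2`.
A reflection `sr i` fixes no coset of `1` or `⟨r 1⟩`, and the rotations `r j` form a transversal
of `⟨sr a⟩` with `sr i` fixing `r j ⟨sr a⟩` iff `2 j = a - i`. So everything reduces to counting
the solutions of `2 j = t` and `2 j = t + 1` in `ZMod n`: for `n` odd doubling is bijective,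
and for `n` even exactly one of `t`, `t + 1` is a double, and it has exactly two halves.
-/

namespace ZMod

theorem exists_eq_two_mul_or_eq_two_mul_add_one {n : ℕ} (t : ZMod n) :
    ∃ k, t = 2 * k ∨ t = 2 * k + 1 := by
  obtain ⟨z, rfl⟩ := intCast_surjective t
  obtain ⟨k, rfl | rfl⟩ := Int.even_or_odd' z
  exacts [⟨k, Or.inl (by push_cast; ring)⟩, ⟨k, Or.inr (by push_cast; ring)⟩]

theorem two_mul_ne_two_mul_add_one {m : ℕ} (j k : ZMod (2 * m)) : 2 * j ≠ 2 * k + 1 := by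
  intro h
  have := congrArg (castHom (dvd_mul_right 2 m) (ZMod 2)) h
  simp only [map_mul, map_add, map_one, map_ofNat] at this
  rw [show (2 : ZMod 2) = 0 from rfl, zero_mul, zero_mul, zero_add] at this
  exact zero_ne_one this

theorem two_mul_eq_two_mul_iff {m : ℕ} {j k : ZMod (2 * m)} :
    2 * j = 2 * k ↔ j = k ∨ j = k + m := by
  have h2m : (2 * m : ZMod (2 * m)) = 0 := mod_cast natCast_self (2 * m)
  constructor
  · intro h
    obtain ⟨z, hz⟩ := intCast_surjective (j - k)
    have : ((2 * z : ℤ) : ZMod (2 * m)) = 0 := by push_cast; rw [hz, mul_sub, h, sub_self]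
    rw [intCast_zmod_eq_zero_iff_dvd, Nat.cast_mul, Nat.cast_two] at this
    obtain ⟨q, rfl⟩ := Int.dvd_of_mul_dvd_mul_left two_ne_zero this
    obtain ⟨p, rfl | rfl⟩ := Int.even_or_odd' q
    · left
      rw [← sub_eq_zero, ← hz]
      push_cast
      linear_combination (p : ZMod (2 * m)) * h2m
    · right
      rw [← sub_eq_iff_eq_add', ← hz]
      push_cast
      linear_combination (p : ZMod (2 * m)) * h2m
  · rintro (rfl | rfl)
    · rfl
    · linear_combination h2m

theorem card_two_mul_eq_two_mul {m : ℕ} (hm : m ≠ 0) (k : ZMod (2 * m)) :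
    Nat.card {j : ZMod (2 * m) // 2 * j = 2 * k} = 2 := by
  have hne : k ≠ k + m := by
    rw [ne_eq, left_eq_add, natCast_eq_zero_iff]
    intro h
    have := Nat.le_of_dvd (Nat.pos_of_ne_zero hm) h
    omega
  rw [Nat.card_congr (Equiv.subtypeEquivRight fun j => two_mul_eq_two_mul_iff)]
  exact (Nat.card_coe_set_eq {k, k + (m : ZMod (2 * m))}).trans (Set.ncard_pair hne)

theorem card_two_mul_eq_two_mul_add_one {m : ℕ} (k : ZMod (2 * m)) :
    Nat.card {j : ZMod (2 * m) // 2 * j = 2 * k + 1} = 0 :=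
  have : IsEmpty {j : ZMod (2 * m) // 2 * j = 2 * k + 1} :=
    ⟨fun j => two_mul_ne_two_mul_add_one j.1 k j.2⟩
  Nat.card_of_isEmpty

theorem card_two_mul_eq_of_odd {n : ℕ} (hn : Odd n) (t : ZMod n) :
    Nat.card {j : ZMod n // 2 * j = t} = 1 := by
  let u := unitOfCoprime 2 (Nat.coprime_two_left.mpr hn)
  have h2 : (u : ZMod n) = 2 := by simp [u]
  rw [Nat.card_congr (Equiv.subtypeEquivRight (q := (· = ↑u⁻¹ * t)) fun j => by
    rw [← h2, Units.eq_inv_mul_iff_mul_eq])]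
  exact Nat.card_unique

theorem card_two_mul_eq_add_card_two_mul_eq_add_one {n : ℕ} (hn : n ≠ 0) (t : ZMod n) :
    Nat.card {j : ZMod n // 2 * j = t} + Nat.card {j : ZMod n // 2 * j = t + 1} = 2 := by
  obtain ⟨m, rfl | rfl⟩ := Nat.even_or_odd' n
  · have hm : m ≠ 0 := by omega
    obtain ⟨k, rfl | rfl⟩ := exists_eq_two_mul_or_eq_two_mul_add_one t
    · rw [card_two_mul_eq_two_mul hm, card_two_mul_eq_two_mul_add_one]
    · rw [card_two_mul_eq_two_mul_add_one, add_assoc, one_add_one_eq_two, ← mul_add_one,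
        card_two_mul_eq_two_mul hm]
  · rw [card_two_mul_eq_of_odd ⟨m, rfl⟩, card_two_mul_eq_of_odd ⟨m, rfl⟩]

end ZMod

section PermChar

variable {G : Type*} [Group G]

theorem smul_coe_eq_self_iff (H : Subgroup G) (x y : G) :
    x • (y : G ⧸ H) = y ↔ y⁻¹ * x * y ∈ H := by
  rw [MulAction.Quotient.smul_coe, smul_eq_mul, QuotientGroup.eq,
    show (x * y)⁻¹ * y = (y⁻¹ * x * y)⁻¹ by group, inv_mem_iff]

theorem permChar_eq_card_of_bijective {ι : Type*} {H : Subgroup G} {f : ι → G}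
    (hf : Function.Bijective fun i => (f i : G ⧸ H)) (x : G) :
    permChar H x = Nat.card {i : ι // (f i)⁻¹ * x * f i ∈ H} := by
  unfold permChar
  congr 1
  exact (Nat.card_congr ((Equiv.ofBijective _ hf).subtypeEquiv
    fun i => (smul_coe_eq_self_iff H x (f i)).symm)).symm

open scoped Classical in
theorem permChar_of_forall_conj_mem_iff {H : Subgroup G} {x : G}
    (hx : ∀ y : G, y⁻¹ * x * y ∈ H ↔ x ∈ H) :
    permChar H x = if x ∈ H then (H.index : ℤ) else 0 := by
  have hfix (q : G ⧸ H) : x • q = q ↔ x ∈ H := by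
    obtain ⟨y, rfl⟩ := QuotientGroup.mk_surjective q
    exact (smul_coe_eq_self_iff H x y).trans (hx y)
  unfold permChar
  rw [Nat.card_congr (Equiv.subtypeEquivRight hfix)]
  split_ifs with h <;> simp [h, Subgroup.index]

open scoped Classical in
theorem permChar_of_normal (H : Subgroup G) [hH : H.Normal] (x : G) :
    permChar H x = if x ∈ H then (H.index : ℤ) else 0 :=
  permChar_of_forall_conj_mem_iff fun y =>
    ⟨fun h => by simpa [mul_assoc] using hH.conj_mem' _ h y⁻¹, fun h => hH.conj_mem' x h y⟩

end PermChar

namespace DihedralGroup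

open Subgroup

variable {n : ℕ}

@[simp]
theorem r_eq_one {i : ZMod n} : r i = 1 ↔ i = 0 :=
  ⟨fun h => r.inj h, fun h => h ▸ rfl⟩

@[simp]
theorem sr_ne_one (i : ZMod n) : sr i ≠ 1 :=
  nofun

theorem mem_zpowers_sr_iff {a : ZMod n} {x : DihedralGroup n} :
    x ∈ zpowers (sr a) ↔ x = 1 ∨ x = sr a := by
  rw [(orderOf_pos_iff.mp (orderOf_sr a ▸ two_pos)).mem_zpowers_iff_mem_range_orderOf,
    orderOf_sr]
  simp [Finset.range_add_one, or_comm]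

theorem r_mem_zpowers_r_one (i : ZMod n) : r i ∈ zpowers (r 1) := by
  obtain ⟨k, rfl⟩ := ZMod.intCast_surjective i
  exact ⟨k, r_one_zpow k⟩

theorem sr_notMem_zpowers_r_one (i : ZMod n) : sr i ∉ zpowers (r 1) := by
  rintro ⟨k, hk⟩
  simp at hk

theorem index_zpowers_sr (a : ZMod n) : (zpowers (sr a)).index = n := by
  have h := index_mul_card (zpowers (sr a))
  rw [nat_card, Nat.card_zpowers, orderOf_sr] at h
  omega

theorem index_zpowers_r_one [NeZero n] : (zpowers (r 1 : DihedralGroup n)).index = 2 := by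
  have h := index_mul_card (zpowers (r 1 : DihedralGroup n))
  rw [nat_card, Nat.card_zpowers, orderOf_r_one] at h
  exact Nat.eq_of_mul_eq_mul_right (Nat.pos_of_neZero n) h

theorem bijective_mk_r_zpowers_sr [NeZero n] (a : ZMod n) :
    Function.Bijective fun j : ZMod n => (r j : DihedralGroup n ⧸ zpowers (sr a)) := by
  refine Function.Injective.bijective_of_nat_card_le (fun j k hjk => ?_) ?_
  · rw [QuotientGroup.eq, mem_zpowers_sr_iff] at hjk
    simpa [neg_add_eq_zero] using hjk
  · rw [← index, index_zpowers_sr, Nat.card_zmod]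

theorem permChar_zpowers_sr_r [NeZero n] (a i : ZMod n) :
    permChar (zpowers (sr a)) (r i) = if i = 0 then (n : ℤ) else 0 := by
  rw [permChar_eq_card_of_bijective (bijective_mk_r_zpowers_sr a)]
  simp only [inv_r, r_mul_r, mem_zpowers_sr_iff, neg_add_cancel_comm]
  split_ifs with h <;> simp [h]

theorem permChar_zpowers_sr_sr [NeZero n] (a i : ZMod n) :
    permChar (zpowers (sr a)) (sr i) = Nat.card {j : ZMod n // 2 * j = a - i} := by
  rw [permChar_eq_card_of_bijective (bijective_mk_r_zpowers_sr a)]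
  congr 1
  refine Nat.card_congr (Equiv.subtypeEquivRight fun j => ?_)
  simp only [inv_r, r_mul_sr, sr_mul_r, mem_zpowers_sr_iff, sr_ne_one, false_or, sr.injEq]
  constructor <;> intro h <;> linear_combination h

end DihedralGroup

open DihedralGroup Subgroup in
/-- For the dihedral group G = D_2n with presentation < g, h | h^n = g^2 = (gh)^2 = 1 >
(realised as Mathlib's DihedralGroup n, with g = sr 0 a reflection and h = r 1 the
basic rotation), the combination `{1} - <g> - <gh> - <h> + 2 G` is a G-relation:
`C[G] + 2 C[G/G] = C[G/<g>] + C[G/<gh>] + C[G/<h>]` as virtual complex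
representations, expressed as an equality of permutation characters. -/
theorem dihedral_relation (n : ℕ) (hn : 0 < n) :
    ∀ x : DihedralGroup n,
      permChar (⊥ : Subgroup (DihedralGroup n)) x
          + 2 * permChar (⊤ : Subgroup (DihedralGroup n)) x
        = permChar (Subgroup.zpowers (DihedralGroup.sr 0)) x
            + permChar (Subgroup.zpowers (DihedralGroup.sr 0 * DihedralGroup.r 1)) x
            + permChar (Subgroup.zpowers (DihedralGroup.r 1)) x := by
  have : NeZero n := ⟨hn.ne'⟩
  have : (zpowers (r 1 : DihedralGroup n)).Normal := normal_of_index_eq_two index_zpowers_r_one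
  rintro (i | i)
  · simp only [permChar_of_normal, mem_bot, mem_top, index_bot, index_top, sr_mul_r, zero_add,
      permChar_zpowers_sr_r, r_mem_zpowers_r_one, index_zpowers_r_one, r_eq_one, nat_card]
    split_ifs
    · push_cast
      ring
    · norm_num
  · simp only [permChar_of_normal, mem_bot, mem_top, index_top, sr_mul_r, zero_add, sr_ne_one,
      sr_notMem_zpowers_r_one, permChar_zpowers_sr_sr]
    have h := ZMod.card_two_mul_eq_add_card_two_mul_eq_add_one hn.ne' (0 - i)
    rw [sub_add_eq_add_sub, zero_add] at h
    push_cast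
    omega
end

section
/- Explicit regulator constants for permutation modules: if ρ = 𝒦[G/D] with the standard pairing making the cosets of D an orthonormal basis, then for any subgroup H ≤ G, det((1/|H|)⟨,⟩ | ρ^H) = ∏_{w ∈ H\G/D} 1/|H ∩ D^w|, where D^w = wDw⁻¹ and the product is over double-coset representatives. -/
/-!
The H-orbit sums `e_w` of the cosets `wD`, for `w` running over double coset representatives,
form a basis of `ρ^H`: an invariant function is determined by its values on representatives.
They are pairwise orthogonal since distinct orbits are disjoint, and
`⟨e_w, e_w⟩ = |H • wD| = |H| / |H ∩ D^w|` by the orbit-stabiliser theorem, the stabiliser of `wD`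
in `G` being `D^w`. So the Gram matrix of `(1/|H|)⟨,⟩` in this basis is `diag(1/|H ∩ D^w|)`, and
a change of basis multiplies the Gram determinant by the square of the (invertible)
change-of-basis determinant.
-/

open scoped BigOperators

/-- The subspace of H-invariant functions in the permutation module K[G/D] of
functions on the coset space G/D (with G acting by (g . f)(x) = f (g^-1 . x)). -/
def permInvariants (K : Type*) [Field K] {G : Type*} [Group G] (D H : Subgroup G) :
    Submodule K ((G ⧸ D) → K) where
  carrier := {f | ∀ h ∈ H, ∀ x : G ⧸ D, f (h • x) = f x}
  zero_mem' := fun _ _ _ => rfl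
  add_mem' := by
    intro f f' hf hf' h hh x
    simp [hf h hh x, hf' h hh x]
  smul_mem' := by
    intro c f hf h hh x
    simp [hf h hh x]

open MulAction

theorem LinearMap.BilinForm.exists_isUnit_det_toMatrix_eq_sq_mul {R M ι ι' : Type*} [CommRing R]
    [Nontrivial R] [AddCommGroup M] [Module R M] [Fintype ι] [DecidableEq ι] [Fintype ι']
    [DecidableEq ι'] (B : LinearMap.BilinForm R M) (b : Module.Basis ι R M)
    (v : Module.Basis ι' R M) :
    ∃ c : R, IsUnit c ∧ (toMatrix b B).det = c ^ 2 * (toMatrix v B).det := by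
  set e := b.indexEquiv v
  set v' := v.reindex e.symm
  have hv' : toMatrix v' B = (toMatrix v B).submatrix e e := by
    ext i j
    simp [v', toMatrix_apply]
  refine ⟨(v'.toMatrix b).det,
    Matrix.isUnit_det_of_right_inverse (Module.Basis.toMatrix_mul_toMatrix_flip v' b), ?_⟩
  rw [← toMatrix_mul_basis_toMatrix v' b, Matrix.det_mul, Matrix.det_mul, Matrix.det_transpose,
    hv', Matrix.det_submatrix_equiv_self]
  ring

namespace MulAction

variable {G X : Type*} [Group G] [MulAction G X]

theorem notMem_orbit_of_ne {ι : Type*} {r : ι → X} (hr : ∀ x, ∃! i, x ∈ orbit G (r i))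
    {i j : ι} (hij : i ≠ j) : r j ∉ orbit G (r i) :=
  fun h => hij ((hr (r j)).unique h (mem_orbit_self (r j)))

theorem sum_indicator_orbit_mul_self (K : Type*) [Semiring K] [Fintype X] (x : X) :
    ∑ z, (orbit G x).indicator (1 : X → K) z * (orbit G x).indicator 1 z =
      Nat.card (orbit G x) := by
  classical
  simp_rw [← Set.inter_indicator_mul, Set.inter_self, Pi.one_apply, mul_one, Set.indicator_apply,
    Finset.sum_boole, Nat.card_eq_card_toFinset, Set.filter_mem_univ_eq_toFinset]

theorem sum_indicator_orbit_mul_of_notMem (K : Type*) [Semiring K] [Fintype X] {x y : X}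
    (hxy : y ∉ orbit G x) :
    ∑ z, (orbit G x).indicator (1 : X → K) z * (orbit G y).indicator 1 z = 0 := by
  refine Finset.sum_eq_zero fun z _ => ?_
  by_cases hx : z ∈ orbit G x
  · have hy : z ∉ orbit G y := fun hy =>
      hxy (orbit_eq_iff.1 ((orbit_eq_iff.2 hx).symm.trans (orbit_eq_iff.2 hy)).symm)
    simp [hy]
  · simp [hx]

theorem inv_card_mul_card_orbit (K : Type*) [Field K] [CharZero K] [Finite G] (x : X) :
    (Nat.card G : K)⁻¹ * Nat.card (orbit G x) = (Nat.card (stabilizer G x) : K)⁻¹ := by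
  have hcard := (stabilizer G x).index_mul_card
  rw [index_stabilizer, ← Nat.card_coe_set_eq] at hcard
  have horbit : (Nat.card (orbit G x) : K) ≠ 0 :=
    Nat.cast_ne_zero.2 (left_ne_zero_of_mul (hcard.trans_ne Nat.card_pos.ne'))
  rw [← hcard, Nat.cast_mul, mul_inv, mul_right_comm, inv_mul_cancel₀ horbit, one_mul]

end MulAction

theorem Subgroup.card_stabilizer_eq_card_inf {G X : Type*} [Group G] [MulAction G X]
    (H : Subgroup G) (x : X) :
    Nat.card (stabilizer H x) = Nat.card (H ⊓ stabilizer G x : Subgroup G) := by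
  have hsub : stabilizer H x = (stabilizer G x).subgroupOf H := rfl
  rw [hsub, ← Subgroup.card_map_of_injective H.subtype_injective, Subgroup.subgroupOf_map_subtype,
    inf_comm]

namespace QuotientGroup

variable {G : Type*} [Group G] {D H : Subgroup G}

theorem stabilizer_mk (w : G) :
    stabilizer G (w : G ⧸ D) = D.map (MulAut.conj w).toMonoidHom := by
  have h := stabilizer_smul_eq_stabilizer_map_conj w ((1 : G) : G ⧸ D)
  rwa [stabilizer_quotient, Quotient.smul_mk, smul_eq_mul, mul_one] at h

theorem card_stabilizer_mk (w : G) :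
    Nat.card (stabilizer H (w : G ⧸ D)) =
      Nat.card (H ⊓ D.map (MulAut.conj w).toMonoidHom : Subgroup G) := by
  rw [← stabilizer_mk]
  exact Subgroup.card_stabilizer_eq_card_inf H (w : G ⧸ D)

theorem mk_mem_orbit_mk_iff {g w : G} :
    (g : G ⧸ D) ∈ orbit H (w : G ⧸ D) ↔ g ∈ DoubleCoset.doubleCoset w H D := by
  rw [DoubleCoset.mem_doubleCoset, mem_orbit_iff]
  constructor
  · rintro ⟨⟨h, hh⟩, hg⟩
    change h • (w : G ⧸ D) = g at hg
    rw [Quotient.smul_mk, QuotientGroup.eq] at hg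
    exact ⟨h, hh, (h * w)⁻¹ * g, hg, by group⟩
  · rintro ⟨h, hh, d, hd, rfl⟩
    refine ⟨⟨h, hh⟩, ?_⟩
    change h • (w : G ⧸ D) = _
    rw [Quotient.smul_mk, QuotientGroup.eq]
    simpa [mul_assoc] using hd

theorem existsUnique_mem_orbit_mk {T : Finset G}
    (hT : ∀ g : G, ∃! w, w ∈ T ∧ g ∈ DoubleCoset.doubleCoset w H D) (x : G ⧸ D) :
    ∃! w : T, x ∈ orbit H ((w : G) : G ⧸ D) := by
  induction x using QuotientGroup.induction_on with | H g => ?_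
  obtain ⟨w, ⟨hwT, hgw⟩, huniq⟩ := hT g
  exact ⟨⟨w, hwT⟩, mk_mem_orbit_mk_iff.2 hgw,
    fun w' hw' => Subtype.ext (huniq w' ⟨w'.2, mk_mem_orbit_mk_iff.1 hw'⟩)⟩

end QuotientGroup

namespace PermutationModule

variable (K : Type*) [Field K] {G : Type*} [Group G] (D H : Subgroup G)

noncomputable def orbitIndicator (x : G ⧸ D) : permInvariants K D H :=
  ⟨(orbit H x).indicator 1, fun h hh y => by
    have hmem : h • y ∈ orbit H x ↔ y ∈ orbit H x := by
      rw [← orbit_eq_iff, ← orbit_eq_iff]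
      exact Eq.congr_left (orbit_smul (⟨h, hh⟩ : H) y)
    classical
    simp only [Set.indicator_apply, hmem, Pi.one_apply]⟩

theorem coe_orbitIndicator (x : G ⧸ D) :
    (orbitIndicator K D H x : (G ⧸ D) → K) = (orbit H x).indicator 1 := rfl

noncomputable def permForm [Fintype (G ⧸ D)] : LinearMap.BilinForm K (permInvariants K D H) :=
  (Nat.card H : K)⁻¹ •
    (dotProductBilin K K).compl₁₂ (permInvariants K D H).subtype (permInvariants K D H).subtype

variable {K D H}

theorem permForm_apply [Fintype (G ⧸ D)] (f g : permInvariants K D H) :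
    permForm K D H f g = (Nat.card H : K)⁻¹ * ∑ x, (f : (G ⧸ D) → K) x * (g : (G ⧸ D) → K) x :=
  rfl

theorem toMatrix_permForm [Fintype (G ⧸ D)] {ι : Type*} [Fintype ι] [DecidableEq ι]
    (b : Module.Basis ι K (permInvariants K D H)) :
    LinearMap.BilinForm.toMatrix b (permForm K D H) = Matrix.of fun j k =>
      (Nat.card H : K)⁻¹ * ∑ x, (b j : (G ⧸ D) → K) x * (b k : (G ⧸ D) → K) x := by
  ext j k
  rw [LinearMap.BilinForm.toMatrix_apply, permForm_apply, Matrix.of_apply]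

theorem permForm_orbitIndicator_self [Fintype (G ⧸ D)] [Finite G] [CharZero K] (x : G ⧸ D) :
    permForm K D H (orbitIndicator K D H x) (orbitIndicator K D H x) =
      (Nat.card (stabilizer H x) : K)⁻¹ := by
  rw [permForm_apply, coe_orbitIndicator, sum_indicator_orbit_mul_self, inv_card_mul_card_orbit]

theorem permForm_orbitIndicator_of_notMem [Fintype (G ⧸ D)] {x y : G ⧸ D}
    (hxy : y ∉ orbit H x) :
    permForm K D H (orbitIndicator K D H x) (orbitIndicator K D H y) = 0 := by
  rw [permForm_apply, coe_orbitIndicator, coe_orbitIndicator,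
    sum_indicator_orbit_mul_of_notMem K hxy, mul_zero]

theorem apply_eq_of_mem_orbit (f : permInvariants K D H) {x y : G ⧸ D} (hy : y ∈ orbit H x) :
    (f : (G ⧸ D) → K) y = (f : (G ⧸ D) → K) x := by
  obtain ⟨⟨h, hh⟩, rfl⟩ := hy
  exact f.2 h hh x

theorem eq_sum_smul_orbitIndicator {ι : Type*} [Fintype ι] {r : ι → G ⧸ D}
    (hr : ∀ x, ∃! i, x ∈ orbit H (r i)) (f : permInvariants K D H) :
    f = ∑ i, (f : (G ⧸ D) → K) (r i) • orbitIndicator K D H (r i) := by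
  ext x
  obtain ⟨i, hi, huniq⟩ := hr x
  rw [Submodule.coe_sum, Finset.sum_apply, Finset.sum_eq_single i]
  · simp [coe_orbitIndicator, Set.indicator_of_mem hi, apply_eq_of_mem_orbit f hi]
  · intro j _ hji
    simp [coe_orbitIndicator, Set.indicator_of_notMem fun hj => hji (huniq j hj)]
  · simp

section OrbitBasis

variable (K) [Fintype (G ⧸ D)] [Finite G] [CharZero K] {ι : Type*} [Fintype ι] {r : ι → G ⧸ D}

noncomputable def orbitBasis (hr : ∀ x, ∃! i, x ∈ orbit H (r i)) :
    Module.Basis ι K (permInvariants K D H) :=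
  Module.Basis.mk (v := fun i => orbitIndicator K D H (r i))
    (LinearMap.BilinForm.linearIndependent_of_iIsOrtho (B := permForm K D H)
      (fun _ _ hij => permForm_orbitIndicator_of_notMem (notMem_orbit_of_ne hr hij))
      (fun i => by
        rw [permForm_orbitIndicator_self]
        exact inv_ne_zero (Nat.cast_ne_zero.2 Nat.card_pos.ne')))
    (fun f _ => (eq_sum_smul_orbitIndicator hr f) ▸
      Submodule.sum_mem _ fun i _ => Submodule.smul_mem _ _ (Submodule.subset_span ⟨i, rfl⟩))

theorem toMatrix_orbitBasis [DecidableEq ι] (hr : ∀ x, ∃! i, x ∈ orbit H (r i)) :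
    LinearMap.BilinForm.toMatrix (orbitBasis K hr) (permForm K D H) =
      Matrix.diagonal fun i => (Nat.card (stabilizer H (r i)) : K)⁻¹ := by
  ext i j
  rw [LinearMap.BilinForm.toMatrix_apply, orbitBasis, Module.Basis.mk_apply,
    Module.Basis.mk_apply]
  rcases eq_or_ne i j with rfl | hij
  · rw [Matrix.diagonal_apply_eq, permForm_orbitIndicator_self]
  · rw [Matrix.diagonal_apply_ne _ hij,
      permForm_orbitIndicator_of_notMem (notMem_orbit_of_ne hr hij)]

end OrbitBasis

end PermutationModule

open PermutationModule

/-- Explicit regulator constants for permutation modules: if rho = K[G/D] with the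
standard pairing <f1, f2> = sum_x f1(x) f2(x) making the cosets of D an orthonormal
basis, then for any subgroup H of G, computing the Gram determinant of (1/|H|) <,> on
the H-invariants rho^H in any basis,
  det((1/|H|)<,> | rho^H) = prod_{w in H\G/D} 1/|H meet D^w|
in K^x modulo squares, where D^w = w D w^-1 and the product is over a complete set T
of representatives of the double cosets H\G/D. -/
theorem permutation_module_regulator_determinant
    {K : Type*} [Field K] [CharZero K]
    {G : Type*} [Group G] [Fintype G] (D H : Subgroup G)
    [Fintype (G ⧸ D)]
    (T : Finset G)
    (hT : ∀ g : G, ∃! x, x ∈ T ∧ ∃ h ∈ H, ∃ d ∈ D, g = h * x * d)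
    {κ : Type*} [Fintype κ] [DecidableEq κ]
    (b : Module.Basis κ K (permInvariants K D H)) :
    ∃ c : K, c ≠ 0 ∧
      Matrix.det (Matrix.of fun j k : κ =>
          (Nat.card H : K)⁻¹ *
            ∑ x : G ⧸ D, ((b j : (G ⧸ D) → K) x * (b k : (G ⧸ D) → K) x))
        = c ^ 2 * ∏ w ∈ T,
            ((Nat.card (H ⊓ D.map (MulAut.conj w).toMonoidHom : Subgroup G) : K))⁻¹ := by
  classical
  have hr := QuotientGroup.existsUnique_mem_orbit_mk (T := T) fun g => by
    simpa only [DoubleCoset.mem_doubleCoset, SetLike.mem_coe] using hT g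
  obtain ⟨c, hc, hdet⟩ :=
    (permForm K D H).exists_isUnit_det_toMatrix_eq_sq_mul b (orbitBasis K hr)
  refine ⟨c, hc.ne_zero, ?_⟩
  rw [← toMatrix_permForm, hdet, toMatrix_orbitBasis, Matrix.det_diagonal,
    ← Finset.prod_coe_sort T]
  simp only [QuotientGroup.card_stabilizer_mk]
end
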